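/- arXiv:1512.00354 — 2 statements merged into one kernel-verified Lean document; each statement's English description precedes it below -/
import Mathlib

section
/- Let A be a commutative ring and n ≥ 2. Inside GL_n(A[Z,Z^{-1}]), consider the subgroups U^+ of upper unitriangular matrices with entries in Z·A[Z], M = GL_n-block-diagonal matrices with entries in A, and U^- of lower unitriangular matrices with entries in Z^{-1}·A[Z^{-1}] (with respect to a fixed block decomposition). Then (U^+ · M · U^-) ∩ GL_n(A[Z], Z·A[Z]) = U^+, where GL_n(A[Z], Z·A[Z]) denotes matrices over A[Z] congruent to the identity mod Z. -/
/-!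
Since `u` is unitriangular with entries in `A[Z]` and `m` is invertible over `A`, the factor
`w = m⁻¹ u⁻¹ g` has entries in `A[Z]`. Its off-diagonal blocks also lie in `Z⁻¹A[Z⁻¹]`,
and `A[Z] ∩ Z⁻¹A[Z⁻¹] = 0`, so `w = 1`. Then the diagonal blocks of `g = u m` are those of
the constant matrix `m`, so `g ≡ 1 (mod Z)` forces `m = 1`, i.e. `g = u`.
-/

open Polynomial LaurentPolynomial

namespace LaurentPolynomial

theorem coeff_toLaurent_of_neg {R : Type*} [Semiring R] (p : R[X]) {k : ℤ} (hk : k < 0) :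
    (toLaurent p).coeff k = 0 := by
  rw [coeff_toLaurent]
  refine Finsupp.mapDomain_of_notMem_range _ _ ?_
  rintro ⟨n, rfl⟩
  exact absurd hk (by simp)

variable {R : Type*} [CommSemiring R]

theorem algebraMap_eq_toLaurent_C (r : R) :
    algebraMap R R[T;T⁻¹] r = toLaurent (Polynomial.C r) :=
  ((toLaurent_C r).trans (C_eq_algebraMap r)).symm

theorem eval₂_T_neg_one_eq_invert_toLaurent (p : R[X]) :
    p.eval₂ (algebraMap R R[T;T⁻¹]) (T (-1)) = invert (toLaurent p) := by
  induction p using Polynomial.induction_on' with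
  | add p q hp hq => simp only [eval₂_add, hp, hq, map_add]
  | monomial n a =>
    rw [eval₂_monomial, ← C_mul_X_pow_eq_monomial, map_mul, map_pow, toLaurent_C, toLaurent_X,
      map_mul, map_pow, invert_C, invert_T, C_eq_algebraMap]

theorem toLaurent_eq_zero_of_eq_invert_mul_T_neg_one {p r : R[X]}
    (h : toLaurent p = invert (toLaurent r) * T (-1)) : toLaurent p = 0 := by
  ext k
  rcases lt_or_ge k 0 with hk | hk
  · exact coeff_toLaurent_of_neg p hk
  · rw [h, T, AddMonoidAlgebra.coeff_mul_single_apply, invert_apply,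
      coeff_toLaurent_of_neg r (by omega), zero_mul]
    rfl

end LaurentPolynomial

namespace Matrix

variable {ι α R : Type*} [DecidableEq ι] {b : ι → α}

theorem eq_one_of_blocks [Zero R] [One R] {M : Matrix ι ι R}
    (hdiag : ∀ i j, b i = b j → M i j = if i = j then 1 else 0)
    (hoff : ∀ i j, b i ≠ b j → M i j = 0) : M = 1 := by
  ext i j
  by_cases hij : b i = b j
  · rw [hdiag i j hij, one_apply]
  · rw [hoff i j hij, one_apply, if_neg (ne_of_apply_ne b hij)]

theorem eq_one_of_mem_range_toLaurent [LinearOrder α] [CommRing R]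
    {w : Matrix ι ι R[T;T⁻¹]}
    (hw_diag : ∀ i j, b i = b j → w i j = if i = j then 1 else 0)
    (hw_up : ∀ i j, b i < b j → w i j = 0)
    (hw_low : ∀ i j, b j < b i →
      ∃ q : R[X], w i j = q.eval₂ (algebraMap R R[T;T⁻¹]) (T (-1)) * T (-1))
    (hw_poly : ∀ i j, w i j ∈ (toLaurent : R[X] →+* R[T;T⁻¹]).range) : w = 1 := by
  refine eq_one_of_blocks hw_diag fun i j hij => ?_
  rcases hij.lt_or_gt with h | h
  · exact hw_up i j h
  · obtain ⟨r, hr⟩ := hw_low i j h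
    obtain ⟨p, hp⟩ := hw_poly i j
    rw [← hp, eval₂_T_neg_one_eq_invert_toLaurent] at hr
    rw [← hp]
    exact toLaurent_eq_zero_of_eq_invert_mul_T_neg_one hr

variable [Fintype ι]

theorem mem_range_mapMatrix_iff {S : Type*} [Ring R] [Ring S] {f : R →+* S}
    {M : Matrix ι ι S} : M ∈ f.mapMatrix.range ↔ ∀ i j, M i j ∈ f.range := by
  refine ⟨?_, fun h => ?_⟩
  · rintro ⟨N, rfl⟩ i j
    exact ⟨N i j, rfl⟩
  · choose N hN using h
    exact ⟨of N, ext hN⟩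

theorem adjugate_mem_range_mapMatrix {S : Type*} [CommRing R] [CommRing S] {f : R →+* S}
    {M : Matrix ι ι S} (hM : M ∈ f.mapMatrix.range) : M.adjugate ∈ f.mapMatrix.range := by
  obtain ⟨N, rfl⟩ := hM
  exact ⟨N.adjugate, f.map_adjugate N⟩

variable [LinearOrder α] [CommRing R]

theorem det_eq_one_of_blockTriangular {M : Matrix ι ι R} (hM : BlockTriangular M b)
    (hdiag : ∀ i j, b i = b j → M i j = if i = j then 1 else 0) : M.det = 1 := by
  rw [hM.det]
  refine Finset.prod_eq_one fun a _ => ?_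
  have : M.toSquareBlock b a = 1 := by
    ext i j
    rw [toSquareBlock_def, of_apply, hdiag _ _ (i.2.trans j.2.symm), one_apply]
    exact if_congr Subtype.ext_iff.symm rfl rfl
  rw [this, det_one]

theorem mul_apply_of_blockTriangular {M N : Matrix ι ι R} (hM : BlockTriangular M b)
    (hMdiag : ∀ i j, b i = b j → M i j = if i = j then 1 else 0)
    (hN : ∀ i j, b i ≠ b j → N i j = 0) {i j : ι} (hij : b i = b j) :
    (M * N) i j = N i j := by
  rw [mul_apply, Finset.sum_eq_single i, hMdiag i i rfl, if_pos rfl, one_mul]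
  · intro k _ hki
    rcases lt_trichotomy (b k) (b i) with hlt | heq | hgt
    · rw [hM hlt, zero_mul]
    · rw [hMdiag i k heq.symm, if_neg (Ne.symm hki), zero_mul]
    · rw [hN k j (hij ▸ hgt.ne'), mul_zero]
  · exact fun h => (h (Finset.mem_univ i)).elim

theorem eq_one_of_mul_map_algebraMap_eq_map_toLaurent {u : Matrix ι ι R[T;T⁻¹]}
    {c : Matrix ι ι R} {q : Matrix ι ι R[X]} (hu_low : BlockTriangular u b)
    (hu_diag : ∀ i j, b i = b j → u i j = if i = j then 1 else 0)
    (hc_diag : ∀ i j, b i ≠ b j → c i j = 0)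
    (h : u * c.map (algebraMap R R[T;T⁻¹]) = q.map toLaurent)
    (hq0 : ∀ i j, (q i j).eval 0 = if i = j then 1 else 0) : c = 1 := by
  refine eq_one_of_blocks (fun i j hij => ?_) hc_diag
  have hqc : q i j = Polynomial.C (c i j) := by
    apply toLaurent_injective
    rw [← algebraMap_eq_toLaurent_C, ← map_apply (f := toLaurent), ← h,
      mul_apply_of_blockTriangular hu_low hu_diag _ hij, map_apply]
    intro k l hkl
    rw [map_apply, hc_diag k l hkl, map_zero]
  rw [← hq0 i j, hqc, eval_C]

end Matrix

theorem stmt_11_general (A : Type*) [CommRing A] (n : ℕ)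
    (π : Fin n → ℕ)
    (u m w g : Matrix (Fin n) (Fin n) (LaurentPolynomial A))
    -- `u ∈ U^+`: block upper unitriangular, upper entries in `Z·A[Z]`
    (hu_diag : ∀ i j, π i = π j → u i j = if i = j then 1 else 0)
    (hu_low : ∀ i j, π j < π i → u i j = 0)
    (hu_up : ∀ i j, π i < π j →
      ∃ q : Polynomial A, u i j = Polynomial.toLaurent q * LaurentPolynomial.T 1)
    -- `m ∈ M(A)`: invertible block diagonal with entries in `A`
    (c : Matrix (Fin n) (Fin n) A) (hc : IsUnit c)
    (hm : m = c.map (algebraMap A (LaurentPolynomial A)))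
    (hc_diag : ∀ i j, π i ≠ π j → c i j = 0)
    -- `w ∈ U^-`: block lower unitriangular, lower entries in `Z^{-1}·A[Z^{-1}]`
    (hw_diag : ∀ i j, π i = π j → w i j = if i = j then 1 else 0)
    (hw_up : ∀ i j, π i < π j → w i j = 0)
    (hw_low : ∀ i j, π j < π i →
      ∃ q : Polynomial A, w i j =
        Polynomial.eval₂ (algebraMap A (LaurentPolynomial A)) (LaurentPolynomial.T (-1)) q *
          LaurentPolynomial.T (-1))
    -- `g = u·m·w` lies in `GL_n(A[Z], Z·A[Z])`
    (hg : g = u * m * w)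
    (q : Matrix (Fin n) (Fin n) (Polynomial A)) (hgq : g = q.map Polynomial.toLaurent)
    (hq0 : ∀ i j, Polynomial.eval 0 (q i j) = if i = j then 1 else 0) :
    -- then `g ∈ U^+`
    (∀ i j, π i = π j → g i j = if i = j then 1 else 0) ∧
    (∀ i j, π j < π i → g i j = 0) ∧
    (∀ i j, π i < π j →
      ∃ p : Polynomial A, g i j = Polynomial.toLaurent p * LaurentPolynomial.T 1) := by
  set Φ := (toLaurent : A[X] →+* A[T;T⁻¹]).mapMatrix (m := Fin n)
  have hu_poly : u ∈ Φ.range := by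
    refine Matrix.mem_range_mapMatrix_iff.2 fun i j => ?_
    rcases lt_trichotomy (π i) (π j) with h | h | h
    · obtain ⟨p, hp⟩ := hu_up i j h
      exact ⟨p * X, by rw [hp, map_mul, toLaurent_X]⟩
    · rw [hu_diag i j h]
      split_ifs
      exacts [one_mem _, zero_mem _]
    · exact ⟨0, by rw [hu_low i j h, map_zero]⟩
  have hu_tri : u.BlockTriangular π := fun i j => hu_low i j
  have hu_det : u.det = 1 := Matrix.det_eq_one_of_blockTriangular hu_tri hu_diag
  have hcinv : (c⁻¹).map (algebraMap A A[T;T⁻¹]) ∈ Φ.range :=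
    ⟨(c⁻¹).map Polynomial.C, Matrix.ext fun i j => by
      simp only [Φ, RingHom.mapMatrix_apply, Matrix.map_apply, algebraMap_eq_toLaurent_C]⟩
  have hu_inv : u.adjugate * u = 1 := by rw [Matrix.adjugate_mul, hu_det, one_smul]
  have hm_inv : (c⁻¹).map (algebraMap A A[T;T⁻¹]) * m = 1 := by
    rw [hm, ← Matrix.map_mul, Matrix.nonsing_inv_mul c ((Matrix.isUnit_iff_isUnit_det c).1 hc),
      Matrix.map_one _ (map_zero _) (map_one _)]
  have hw_poly : w ∈ Φ.range := by
    have hw_eq : w = (c⁻¹).map (algebraMap A A[T;T⁻¹]) * u.adjugate * g := by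
      rw [hg, ← mul_assoc, ← mul_assoc, mul_assoc _ u.adjugate, hu_inv, mul_one, hm_inv,
        one_mul]
    rw [hw_eq]
    exact mul_mem (mul_mem hcinv (Matrix.adjugate_mem_range_mapMatrix hu_poly)) ⟨q, hgq.symm⟩
  have hw : w = 1 := Matrix.eq_one_of_mem_range_toLaurent hw_diag hw_up hw_low
    (Matrix.mem_range_mapMatrix_iff.1 hw_poly)
  have hc1 : c = 1 := Matrix.eq_one_of_mul_map_algebraMap_eq_map_toLaurent
    hu_tri hu_diag hc_diag (by rw [← hm, ← hgq, hg, hw, mul_one]) hq0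
  have hgu : g = u := by
    rw [hg, hw, hm, hc1, Matrix.map_one _ (map_zero _) (map_one _), mul_one, mul_one]
  exact hgu ▸ ⟨hu_diag, hu_low, hu_up⟩

/-- Fix a block decomposition of `n ≥ 2` (given by a monotone block-index
function `π : Fin n → ℕ`).  Inside `GL_n(A[Z,Z^{-1}])` consider `U^+` (block upper
unitriangular matrices with off-diagonal entries in `Z·A[Z]`), `M` (invertible
block-diagonal matrices with entries in `A`), and `U^-` (block lower unitriangular
matrices with off-diagonal entries in `Z^{-1}·A[Z^{-1}]`).  Then
`(U^+ · M · U^-) ∩ GL_n(A[Z], Z·A[Z]) = U^+`: any product `g = u·m·w` of this shape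
whose entries lie in `A[Z]` and which is `≡ 1 (mod Z)` already lies in `U^+`. -/
theorem stmt_11 (A : Type*) [CommRing A] (n : ℕ) (hn : 2 ≤ n)
    (π : Fin n → ℕ) (hπ : Monotone π)
    (u m w g : Matrix (Fin n) (Fin n) (LaurentPolynomial A))
    -- `u ∈ U^+`: block upper unitriangular, upper entries in `Z·A[Z]`
    (hu_diag : ∀ i j, π i = π j → u i j = if i = j then 1 else 0)
    (hu_low : ∀ i j, π j < π i → u i j = 0)
    (hu_up : ∀ i j, π i < π j →
      ∃ q : Polynomial A, u i j = Polynomial.toLaurent q * LaurentPolynomial.T 1)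
    -- `m ∈ M(A)`: invertible block diagonal with entries in `A`
    (c : Matrix (Fin n) (Fin n) A) (hc : IsUnit c)
    (hm : m = c.map (algebraMap A (LaurentPolynomial A)))
    (hc_diag : ∀ i j, π i ≠ π j → c i j = 0)
    -- `w ∈ U^-`: block lower unitriangular, lower entries in `Z^{-1}·A[Z^{-1}]`
    (hw_diag : ∀ i j, π i = π j → w i j = if i = j then 1 else 0)
    (hw_up : ∀ i j, π i < π j → w i j = 0)
    (hw_low : ∀ i j, π j < π i →
      ∃ q : Polynomial A, w i j =
        Polynomial.eval₂ (algebraMap A (LaurentPolynomial A)) (LaurentPolynomial.T (-1)) q *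
          LaurentPolynomial.T (-1))
    -- `g = u·m·w` lies in `GL_n(A[Z], Z·A[Z])`
    (hg : g = u * m * w)
    (q : Matrix (Fin n) (Fin n) (Polynomial A)) (hgq : g = q.map Polynomial.toLaurent)
    (hq0 : ∀ i j, Polynomial.eval 0 (q i j) = if i = j then 1 else 0) :
    -- then `g ∈ U^+`
    (∀ i j, π i = π j → g i j = if i = j then 1 else 0) ∧
    (∀ i j, π j < π i → g i j = 0) ∧
    (∀ i j, π i < π j →
      ∃ p : Polynomial A, g i j = Polynomial.toLaurent p * LaurentPolynomial.T 1) :=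
  stmt_11_general A n π u m w g hu_diag hu_low hu_up c hc hm hc_diag hw_diag hw_up hw_low hg q hgq
    hq0
end

section
/- Let R be a commutative ring, f ∈ R, R_f the localization at f, and R' a flat R-algebra such that R/fR → R'/fR' is an isomorphism, and suppose f is a nonzerodivisor in both R and R'. Then the square of rings R → R_f, R → R', R' → R'_f, R_f → R'_f := R' ⊗_R R_f is a patching (Milnor) square: the natural map R → R_f ×_{R'_f} R' is an isomorphism. -/
set_option maxHeartbeats 1000000


/-- Let `R` be a commutative ring, `f ∈ R` a nonzerodivisor, and `R'`
a flat `R`-algebra in which `f` stays a nonzerodivisor and such that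
`R/fR → R'/fR'` is an isomorphism.  Then `R → R_f, R → R', R_f → R'_f ← R'` is a
patching (Milnor) square: the sequence `0 → R → R_f ⊕ R' → R'_f` is exact, i.e.
`R ≅ R_f ×_{R'_f} R'`. -/
theorem stmt_17 (R : Type*) [CommRing R] (f : R) (hf : f ∈ nonZeroDivisors R)
    (R' : Type*) [CommRing R'] [Algebra R R'] [Module.Flat R R']
    (hf' : algebraMap R R' f ∈ nonZeroDivisors R')
    (hle : Ideal.span ({f} : Set R) ≤
      (Ideal.span ({algebraMap R R' f} : Set R')).comap (algebraMap R R'))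
    (hiso : Function.Bijective
      (Ideal.quotientMap (Ideal.span ({algebraMap R R' f} : Set R'))
        (algebraMap R R') hle)) :
    ∀ (x : Localization.Away f) (y : R'),
      IsLocalization.Away.map (Localization.Away f)
          (Localization.Away (algebraMap R R' f)) (algebraMap R R') f x =
        algebraMap R' (Localization.Away (algebraMap R R' f)) y →
      ∃! r : R, algebraMap R (Localization.Away f) r = x ∧ algebraMap R R' r = y := by
  intro x y hxy
  have hinjRf : Function.Injective (algebraMap R (Localization.Away f)) :=
    IsLocalization.injective _ (Submonoid.powers_le.2 hf)
  have hinjR'f : Function.Injective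
      (algebraMap R' (Localization.Away (algebraMap R R' f))) :=
    IsLocalization.injective _ (Submonoid.powers_le.2 hf')
  -- key induction
  have key : ∀ (n : ℕ) (z : R') (r₀ : R),
      algebraMap R R' r₀ = (algebraMap R R' f) ^ n * z →
      ∃ r : R, algebraMap R R' r = z ∧ f ^ n * r = r₀ := by
    intro n
    induction n with
    | zero =>
      intro z r₀ h
      exact ⟨r₀, by simpa using h, by simp⟩
    | succ n ih =>
      intro z r₀ h
      have hmem : algebraMap R R' r₀ ∈ Ideal.span ({algebraMap R R' f} : Set R') :=
        Ideal.mem_span_singleton'.2 ⟨(algebraMap R R' f) ^ n * z, by rw [h, pow_succ]; ring⟩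
      have h0 : Ideal.quotientMap (Ideal.span ({algebraMap R R' f} : Set R'))
          (algebraMap R R') hle (Ideal.Quotient.mk (Ideal.span ({f} : Set R)) r₀) = 0 := by
        rw [Ideal.quotientMap_mk, Ideal.Quotient.eq_zero_iff_mem]
        exact hmem
      have h1 : r₀ ∈ Ideal.span ({f} : Set R) := by
        rw [← Ideal.Quotient.eq_zero_iff_mem]
        exact (injective_iff_map_eq_zero _).1 hiso.1 _ h0
      obtain ⟨c, hc⟩ := Ideal.mem_span_singleton'.1 h1
      have h3 : algebraMap R R' c = (algebraMap R R' f) ^ n * z := by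
        have h4 : algebraMap R R' c * algebraMap R R' f
            = ((algebraMap R R' f) ^ n * z) * algebraMap R R' f := by
          rw [← map_mul, hc, h, pow_succ]; ring
        exact (mul_cancel_right_mem_nonZeroDivisors hf').1 h4
      obtain ⟨r, hr1, hr2⟩ := ih z c h3
      exact ⟨r, hr1, by rw [pow_succ, mul_comm (f ^ n) f, mul_assoc, hr2, mul_comm, hc]⟩
  -- get representation of x
  obtain ⟨⟨r₀, s⟩, hs⟩ := IsLocalization.surj (Submonoid.powers f) x
  obtain ⟨n, hn⟩ := s.2
  have hn' : f ^ n = (s : R) := hn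
  rw [← hn'] at hs
  -- hs : x * algebraMap R _ ↑s = algebraMap R _ r₀
  set φ := IsLocalization.Away.map (Localization.Away f)
      (Localization.Away (algebraMap R R' f)) (algebraMap R R') f with hφ
  have hmapeq : ∀ a : R, φ (algebraMap R (Localization.Away f) a)
      = algebraMap R' (Localization.Away (algebraMap R R' f)) (algebraMap R R' a) := by
    intro a
    exact IsLocalization.map_eq _ a
  have h5 : algebraMap R' (Localization.Away (algebraMap R R' f)) (y * algebraMap R R' (f ^ n))
      = algebraMap R' (Localization.Away (algebraMap R R' f)) (algebraMap R R' r₀) := by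
    have := congrArg φ hs
    rw [map_mul, hxy, hmapeq, hmapeq] at this
    rw [map_mul]
    exact this
  have h6 : algebraMap R R' r₀ = (algebraMap R R' f) ^ n * y := by
    have := hinjR'f h5
    rw [← this, map_pow]; ring
  obtain ⟨r, hr1, hr2⟩ := key n y r₀ h6
  have hxr : algebraMap R (Localization.Away f) r = x := by
    have hu : IsUnit (algebraMap R (Localization.Away f) (f ^ n)) :=
      IsLocalization.map_units (Localization.Away f) (⟨f ^ n, n, rfl⟩ : Submonoid.powers f)
    apply hu.mul_left_cancel
    rw [← map_mul, hr2, ← hs]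
    ring
  refine ⟨r, ⟨hxr, hr1⟩, ?_⟩
  rintro r' ⟨hr'1, -⟩
  exact hinjRf (by rw [hr'1, hxr])
end
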